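/- Consider the bipartite graph G with sides A = {v_i : i ∈ ℕ} and B = {u_i : i ∈ ℕ}, where v_0 and v_1 are adjacent to every u_i, and for each j ≥ 2 the vertex v_j is adjacent to exactly u_0, u_1, …, u_{j−1}. Then G satisfies the double Hall property. -/

import Mathlib

/-- The set of vertices having at least two neighbors in `X`. -/
def N2 {V : Type*} (G : SimpleGraph V) (X : Set V) : Set V :=
  {v | ∃ x ∈ X, ∃ y ∈ X, x ≠ y ∧ G.Adj v x ∧ G.Adj v y}

/-- `G` is bipartite with sides `A` and `B`. -/
def BipartiteWith {V : Type*} (G : SimpleGraph V) (A B : Set V) : Prop :=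
  (∀ v, v ∈ A ∨ v ∈ B) ∧ Disjoint A B ∧
    ∀ ⦃x y⦄, G.Adj x y → (x ∈ A ∧ y ∈ B) ∨ (x ∈ B ∧ y ∈ A)

/-- The double Hall property for the side `A`. -/
def DHP {V : Type*} (G : SimpleGraph V) (A : Set V) : Prop :=
  2 ≤ Cardinal.mk A ∧
    ∀ X : Set V, X ⊆ A → 2 ≤ Cardinal.mk X → Cardinal.mk X ≤ Cardinal.mk (N2 G X)

/-- `v_i` (left copy) is adjacent to `u_j` (right copy) iff `i ≤ 1`, or `i ≥ 2` and
`j ≤ i - 1`. -/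
def ExRel : ℕ ⊕ ℕ → ℕ ⊕ ℕ → Prop
  | Sum.inl i, Sum.inr j => i ≤ 1 ∨ (2 ≤ i ∧ j ≤ i - 1)
  | _, _ => False

def Gex : SimpleGraph (ℕ ⊕ ℕ) := SimpleGraph.fromRel ExRel

/-!
Write `X = {v_a : a ∈ S}`. A vertex `v_a` with `a ≤ 1` or `a ≥ k` is adjacent to all of
`u_0, …, u_{k-1}`. If `S` is finite with `k ≥ 2` elements, at most `k - 2` of them lie in
`[2, k)`, so two of them are of this kind and `u_0, …, u_{k-1} ∈ N²(X)`. If `S` is infinite,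
every `u_j` has two neighbours `v_a, v_b` with `a, b > j`, so `N²(X) = B` is countably infinite.
-/

open Finset

lemma Gex_adj_inr_inl_iff {j a : ℕ} : Gex.Adj (Sum.inr j) (Sum.inl a) ↔ a ≤ 1 ∨ j < a := by
  simp only [Gex, SimpleGraph.fromRel_adj, ExRel, ne_eq, reduceCtorEq, not_false_eq_true,
    false_or, true_and]
  omega

lemma inr_mem_N2_Gex {S : Set ℕ} {j a b : ℕ} (ha : a ∈ S) (hb : b ∈ S) (hab : a ≠ b)
    (hja : a ≤ 1 ∨ j < a) (hjb : b ≤ 1 ∨ j < b) : Sum.inr j ∈ N2 Gex (Sum.inl '' S) :=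
  ⟨_, Set.mem_image_of_mem _ ha, _, Set.mem_image_of_mem _ hb, Sum.inl_injective.ne hab,
    Gex_adj_inr_inl_iff.2 hja, Gex_adj_inr_inl_iff.2 hjb⟩

lemma one_lt_card_sdiff_Ico_two_card {T : Finset ℕ} (hT : 2 ≤ #T) : 1 < #(T \ Ico 2 #T) := by
  have := card_le_card_sdiff_add_card (s := T) (t := Ico 2 #T)
  rw [Nat.card_Ico] at this
  omega

lemma image_inr_range_card_subset_N2_Gex {T : Finset ℕ} (hT : 2 ≤ #T) :
    Sum.inr '' ↑(range #T) ⊆ N2 Gex (Sum.inl '' ↑T) := by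
  rintro _ ⟨j, hj, rfl⟩
  obtain ⟨a, ha, b, hb, hab⟩ := one_lt_card.1 (one_lt_card_sdiff_Ico_two_card hT)
  simp only [mem_sdiff, mem_Ico, not_and_or, not_le, not_lt] at ha hb
  rw [coe_range, Set.mem_Iio] at hj
  exact inr_mem_N2_Gex (S := ↑T) ha.1 hb.1 hab (by omega) (by omega)

lemma range_inr_subset_N2_Gex {S : Set ℕ} (hS : S.Infinite) :
    Set.range Sum.inr ⊆ N2 Gex (Sum.inl '' S) := by
  rintro _ ⟨j, rfl⟩
  obtain ⟨a, ha, hja⟩ := hS.exists_gt j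
  obtain ⟨b, hb, hab⟩ := hS.exists_gt a
  exact inr_mem_N2_Gex ha hb hab.ne (Or.inr hja) (Or.inr (hja.trans hab))

theorem stmt16 : DHP Gex (Set.range Sum.inl) := by
  refine ⟨?_, fun X hX hX2 => ?_⟩
  · rw [Cardinal.mk_range_eq _ Sum.inl_injective, Cardinal.mk_nat]
    exact_mod_cast (Cardinal.natCast_lt_aleph0 (n := 2)).le
  obtain ⟨S, rfl⟩ := Set.subset_range_iff_exists_image_eq.1 hX
  rw [Cardinal.mk_image_eq Sum.inl_injective] at hX2 ⊢
  rcases S.finite_or_infinite with hS | hS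
  · obtain ⟨T, rfl⟩ := hS.exists_finset_coe
    rw [coe_sort_coe, Cardinal.mk_coe_finset] at hX2 ⊢
    calc (#T : Cardinal) = Cardinal.mk (Sum.inr '' ↑(range #T) : Set (ℕ ⊕ ℕ)) := by
          rw [Cardinal.mk_image_eq Sum.inr_injective, coe_sort_coe, Cardinal.mk_coe_finset,
            card_range]
      _ ≤ _ := Cardinal.mk_le_mk_of_subset
          (image_inr_range_card_subset_N2_Gex (by exact_mod_cast hX2))
  · calc Cardinal.mk S ≤ Cardinal.aleph0 := Cardinal.mk_le_aleph0
      _ = Cardinal.mk (Set.range (Sum.inr : ℕ → ℕ ⊕ ℕ)) := by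
          rw [Cardinal.mk_range_eq _ Sum.inr_injective, Cardinal.mk_nat]
      _ ≤ _ := Cardinal.mk_le_mk_of_subset (range_inr_subset_N2_Gex hS)
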